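/- arXiv:1603.07002 — 5 statements merged into one kernel-verified Lean document; each statement's English description precedes it below -/
import Mathlib

section
/- Let A be a C*-algebra and let u, v ∈ A be partial isometries. Then ‖u*u − v*v‖ ≤ ‖u − v‖. -/
/-!
Put `P = u⋆u` and `Q = v⋆v`, projections in the unitization. Then
`(P - Q)² = ((1 - Q)P)⋆((1 - Q)P) + ((1 - P)Q)((1 - P)Q)⋆` is a sum of two self-adjoint elements
with zero product, so `‖P - Q‖ = max ‖(1 - Q)P‖ ‖(1 - P)Q‖`. Since `(1 - Q)v⋆ = 0`, we have
`(1 - Q)P = (1 - Q)(u - v)⋆u`, whence `‖(1 - Q)P‖ ≤ ‖u - v‖`, and symmetrically for `(1 - P)Q`.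
-/

/-- An element `u` of a C*-algebra is a partial isometry if `u * u* * u = u`. -/
def IsPartialIsometry {A : Type*} [NonUnitalCStarAlgebra A] (u : A) : Prop :=
  u * star u * u = u

namespace IsStarProjection

variable {B : Type*} [CStarAlgebra B] {p q : B}

lemma sub_mul_sub_eq (hp : IsStarProjection p) (hq : IsStarProjection q) :
    (p - q) * (p - q) = star ((1 - q) * p) * ((1 - q) * p) + (1 - p) * q * star ((1 - p) * q) := by
  have hq2 : ∀ a : B, a * q * q = a * q := fun a => by rw [mul_assoc, hq.isIdempotentElem.eq]
  simp only [star_mul, star_sub, hp.isSelfAdjoint.star_eq, hq.isSelfAdjoint.star_eq,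
    mul_sub, sub_mul, one_mul, ← mul_assoc, hq2, hp.isIdempotentElem.eq, hq.isIdempotentElem.eq]
  abel

theorem norm_sub_eq_max (hp : IsStarProjection p) (hq : IsStarProjection q) :
    ‖p - q‖ = max ‖(1 - q) * p‖ ‖(1 - p) * q‖ := by
  set x := (1 - q) * p
  set y := (1 - p) * q
  have hxy : x * y = 0 := by
    simp only [x, y, mul_assoc, ← mul_assoc p, hp.mul_one_sub_self, zero_mul, mul_zero]
  have horth : star x * x * (y * star y) = 0 := by
    rw [mul_assoc, ← mul_assoc x, hxy, zero_mul, mul_zero]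
  have h := (IsSelfAdjoint.star_mul_self x).nnnorm_add_eq_max (IsSelfAdjoint.mul_star_self y) horth
  rw [← hp.sub_mul_sub_eq hq, (hp.isSelfAdjoint.sub hq.isSelfAdjoint).nnnorm_mul_self,
    CStarRing.nnnorm_star_mul_self, CStarRing.nnnorm_self_mul_star, ← sq, ← sq,
    ← (pow_left_mono 2).map_max] at h
  exact congrArg NNReal.toReal (pow_left_injective two_ne_zero h)

end IsStarProjection

namespace IsPartialIsometry

variable {A : Type*} [NonUnitalCStarAlgebra A] {u v : A}

lemma star_mul_self_mul_star (hu : IsPartialIsometry u) : star u * u * star u = star u := by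
  simpa [mul_assoc] using congrArg star hu

lemma isStarProjection_star_mul_self (hu : IsPartialIsometry u) :
    IsStarProjection (star u * u) where
  isIdempotentElem := by
    rw [IsIdempotentElem, ← mul_assoc, hu.star_mul_self_mul_star]
  isSelfAdjoint := .star_mul_self u

lemma norm_le_one (hu : IsPartialIsometry u) : ‖u‖ ≤ 1 := by
  have h := hu.isStarProjection_star_mul_self.norm_le
  rw [CStarRing.norm_star_mul_self] at h
  nlinarith [norm_nonneg u]

lemma inr (hu : IsPartialIsometry u) : IsPartialIsometry (u : Unitization ℂ A) := by
  rw [IsPartialIsometry, ← Unitization.inr_star, ← Unitization.inr_mul, ← Unitization.inr_mul, hu]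

end IsPartialIsometry

section Unital

variable {B : Type*} [CStarAlgebra B] {u v : B}

lemma IsPartialIsometry.norm_one_sub_star_mul_self_mul_le (hu : IsPartialIsometry u)
    (hv : IsPartialIsometry v) : ‖(1 - star v * v) * (star u * u)‖ ≤ ‖u - v‖ := by
  have hv0 : (1 - star v * v) * star v = 0 := by
    rw [sub_mul, one_mul, hv.star_mul_self_mul_star, sub_self]
  have h : (1 - star v * v) * (star u * u) = (1 - star v * v) * star (u - v) * u := by
    rw [star_sub, mul_sub, hv0, sub_zero, mul_assoc]
  calc ‖(1 - star v * v) * (star u * u)‖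
      ≤ ‖1 - star v * v‖ * ‖star (u - v)‖ * ‖u‖ := h ▸ norm_mul₃_le
    _ ≤ 1 * ‖u - v‖ * 1 := by
      rw [norm_star]
      gcongr
      exacts [hv.isStarProjection_star_mul_self.one_sub.norm_le, hu.norm_le_one]
    _ = ‖u - v‖ := by ring

end Unital

open scoped CStarAlgebra in
/-- If `u` and `v` are partial isometries in a C*-algebra, then
`‖u*u − v*v‖ ≤ ‖u − v‖`. -/
theorem norm_star_mul_self_sub_le_of_partialIsometries
    {A : Type*} [NonUnitalCStarAlgebra A] (u v : A)
    (hu : IsPartialIsometry u) (hv : IsPartialIsometry v) :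
    ‖star u * u - star v * v‖ ≤ ‖u - v‖ := by
  have hU := hu.inr
  have hV := hv.inr
  calc ‖star u * u - star v * v‖ = ‖star (u : A⁺¹) * u - star (v : A⁺¹) * v‖ := by
        rw [← Unitization.norm_inr (𝕜 := ℂ)]; simp
    _ = max ‖(1 - star (v : A⁺¹) * v) * (star (u : A⁺¹) * u)‖
          ‖(1 - star (u : A⁺¹) * u) * (star (v : A⁺¹) * v)‖ :=
        hU.isStarProjection_star_mul_self.norm_sub_eq_max hV.isStarProjection_star_mul_self
    _ ≤ ‖(u : A⁺¹) - v‖ :=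
        max_le (hU.norm_one_sub_star_mul_self_mul_le hV)
          (norm_sub_rev (u : A⁺¹) v ▸ hV.norm_one_sub_star_mul_self_mul_le hU)
    _ = ‖u - v‖ := by rw [← Unitization.inr_sub, Unitization.norm_inr]
end

section
/- Let X be a topological space, A a C*-algebra, and f : X → A a continuous function such that f(x) has closed range for every x ∈ X. Let u(x) = 𝐮(f(x)) and fix x₀ ∈ X. Then the following are equivalent: (i) u is continuous at x₀; (ii) the function x ↦ u(x)*u(x) is continuous at x₀; (iii) there exist ε > 0 and a neighborhood V of x₀ such that for every x ∈ V the spectrum of |f(x)| omits the interval (0, ε). -/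
/-!
For `a` of closed range, `𝐮(a) = a g(|a|)` and `𝐮(a)* 𝐮(a) = φ(|a|)` for all continuous `g`, `φ`
vanishing at `0` that agree on the nonzero spectrum of `|a|` with `t ↦ t⁻¹` and with `1`
respectively. A uniform gap `(0, ε)` near `x₀` allows one `g` for all these `x`, so `u` is
continuous by continuity of the functional calculus in the element. Conversely, let `ε₀` be the
gap at `x₀` and `K` a continuous ramp, `0` on `[0, ε₀/2]` and `1` on `[ε₀, ∞)`. Then
`u(x₀)* u(x₀) = K(|f x₀|)`, whereas if `|f x|` has a spectral value in `(0, ε₀/2)` then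
`‖u(x)* u(x) - K(|f x|)‖ ≥ 1`; continuity of both sides at `x₀` rules this out near `x₀`.
-/

open scoped NNReal

variable {A : Type*} [NonUnitalCStarAlgebra A]

/-- The absolute value `|a| = (a*a)^{1/2}` of an element of a C*-algebra. -/
noncomputable def cstarAbs (a : A) : A := cfcₙ Real.sqrt (star a * a)

/-- An element `a` of a C*-algebra has closed range if the spectrum of `|a|`
omits an interval `(0, ε)` for some `ε > 0`. -/
def HasClosedRange (a : A) : Prop :=
  ∃ ε > 0, ∀ x ∈ quasispectrum ℝ (cstarAbs a), x ∉ Set.Ioo 0 ε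

/-- A choice of `ε > 0` witnessing that the spectrum of `|a|` omits `(0, ε)`
(junk value `1` if `a` does not have closed range). -/
noncomputable def crEps (a : A) : ℝ :=
  open Classical in if h : HasClosedRange a then h.choose else 1

/-- The partial isometry `𝐮 a` in the canonical polar decomposition of a closed
range element `a`, given by the explicit formula `𝐮 a = a * h (|a|)` where `h`
is a continuous function with `h 0 = 0` and `h t = t⁻¹` for `t ≥ ε`
(junk values when `a` does not have closed range). -/
noncomputable def polarIso (a : A) : A :=
  a * cfcₙ (fun t : ℝ => t * ((max t (crEps a))⁻¹) ^ 2) (cstarAbs a)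

open Filter Topology

section Abs

attribute [local instance] CStarAlgebra.spectralOrder CStarAlgebra.spectralOrderedRing

theorem cstarAbs_eq_abs (a : A) : cstarAbs a = CFC.abs a :=
  (CFC.sqrt_eq_real_sqrt _ (star_mul_self_nonneg a)).symm

theorem continuous_cstarAbs : Continuous (cstarAbs : A → A) := by
  simpa only [funext cstarAbs_eq_abs] using CFC.continuous_abs

theorem isSelfAdjoint_cstarAbs (a : A) : IsSelfAdjoint (cstarAbs a) :=
  cstarAbs_eq_abs a ▸ (CFC.abs_nonneg a).isSelfAdjoint

theorem cstarAbs_mul_cstarAbs (a : A) : cstarAbs a * cstarAbs a = star a * a := by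
  rw [cstarAbs_eq_abs, CFC.abs_mul_abs]

theorem nonneg_of_mem_quasispectrum_cstarAbs {a : A} {t : ℝ}
    (ht : t ∈ quasispectrum ℝ (cstarAbs a)) : 0 ≤ t :=
  quasispectrum_nonneg_of_nonneg _ (cstarAbs_eq_abs a ▸ CFC.abs_nonneg a) t ht

theorem continuous_cfcₙ_cstarAbs {φ : ℝ → ℝ} (hφ : Continuous φ) (hφ0 : φ 0 = 0) :
    Continuous fun a : A => cfcₙ φ (cstarAbs a) :=
  continuous_cstarAbs.cfcₙ_of_mem_nhdsSet φ univ_mem isSelfAdjoint_cstarAbs hφ.continuousOn hφ0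

end Abs

theorem eq_zero_or_le_of_mem_quasispectrum_cstarAbs {a : A} {ε t : ℝ}
    (hgap : ∀ s ∈ quasispectrum ℝ (cstarAbs a), s ∉ Set.Ioo 0 ε)
    (ht : t ∈ quasispectrum ℝ (cstarAbs a)) : t = 0 ∨ ε ≤ t := by
  rcases (nonneg_of_mem_quasispectrum_cstarAbs ht).eq_or_lt with h | h
  · exact Or.inl h.symm
  · exact Or.inr (le_of_not_gt fun hlt => hgap t ht ⟨h, hlt⟩)

namespace HasClosedRange

theorem crEps_pos {a : A} (ha : HasClosedRange a) : 0 < crEps a := by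
  rw [crEps, dif_pos ha]
  exact ha.choose_spec.1

theorem notMem_Ioo_crEps {a : A} (ha : HasClosedRange a) :
    ∀ t ∈ quasispectrum ℝ (cstarAbs a), t ∉ Set.Ioo 0 (crEps a) := by
  rw [crEps, dif_pos ha]
  exact ha.choose_spec.2

theorem crEps_le {a : A} (ha : HasClosedRange a) {t : ℝ}
    (ht : t ∈ quasispectrum ℝ (cstarAbs a)) (ht0 : t ≠ 0) : crEps a ≤ t :=
  (eq_zero_or_le_of_mem_quasispectrum_cstarAbs ha.notMem_Ioo_crEps ht).resolve_left ht0

end HasClosedRange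

noncomputable def polarFun (ε t : ℝ) : ℝ := t * ((max t ε)⁻¹) ^ 2

theorem polarFun_zero (ε : ℝ) : polarFun ε 0 = 0 := by simp [polarFun]

theorem polarFun_of_le {ε t : ℝ} (hε : 0 < ε) (ht : ε ≤ t) : polarFun ε t = t⁻¹ := by
  have : t ≠ 0 := (hε.trans_le ht).ne'
  rw [polarFun, max_eq_left ht]
  field_simp

theorem continuous_polarFun {ε : ℝ} (hε : 0 < ε) : Continuous (polarFun ε) :=
  continuous_id.mul (((continuous_id.max continuous_const).inv₀
    fun t => (hε.trans_le (le_max_right t ε)).ne').pow 2)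

theorem polarIso_eq_mul_cfcₙ_polarFun (a : A) :
    polarIso a = a * cfcₙ (polarFun (crEps a)) (cstarAbs a) :=
  rfl

theorem polarIso_eq_of_gap {a : A} {ε : ℝ} (hε : 0 < ε)
    (hgap : ∀ t ∈ quasispectrum ℝ (cstarAbs a), t ∉ Set.Ioo 0 ε) :
    polarIso a = a * cfcₙ (polarFun ε) (cstarAbs a) := by
  have ha : HasClosedRange a := ⟨ε, hε, hgap⟩
  rw [polarIso_eq_mul_cfcₙ_polarFun]
  refine congrArg (a * ·) (cfcₙ_congr fun t ht => ?_)
  rcases eq_zero_or_le_of_mem_quasispectrum_cstarAbs hgap ht with rfl | hεt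
  · exact (polarFun_zero _).trans (polarFun_zero ε).symm
  · exact (polarFun_of_le ha.crEps_pos (ha.crEps_le ht (hε.trans_le hεt).ne')).trans
      (polarFun_of_le hε hεt).symm

theorem star_polarIso_mul_polarIso {a : A} (ha : HasClosedRange a) {φ : ℝ → ℝ} (hφ0 : φ 0 = 0)
    (hφ1 : ∀ t ∈ quasispectrum ℝ (cstarAbs a), t ≠ 0 → φ t = 1) :
    star (polarIso a) * polarIso a = cfcₙ φ (cstarAbs a) := by
  have hg : ContinuousOn (polarFun (crEps a)) (quasispectrum ℝ (cstarAbs a)) :=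
    (continuous_polarFun ha.crEps_pos).continuousOn
  have hφg : cfcₙ φ (cstarAbs a) = cfcₙ (fun t => polarFun (crEps a) t * (t * t) *
      polarFun (crEps a) t) (cstarAbs a) := by
    refine cfcₙ_congr fun t ht => ?_
    obtain rfl | ht0 := eq_or_ne t 0
    · simp [hφ0, polarFun_zero]
    · rw [hφ1 t ht ht0, polarFun_of_le ha.crEps_pos (ha.crEps_le ht ht0)]
      field_simp
  have hstar : star (cfcₙ (polarFun (crEps a)) (cstarAbs a)) =
      cfcₙ (polarFun (crEps a)) (cstarAbs a) :=
    IsSelfAdjoint.star_eq (cfcₙ_predicate _ _)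
  rw [hφg, cfcₙ_mul (fun t => polarFun (crEps a) t * (t * t)) _ _ (hg.mul (by fun_prop))
      (by simp [polarFun_zero]) hg (polarFun_zero _),
    cfcₙ_mul _ (fun t => t * t) _ hg (polarFun_zero _),
    cfcₙ_mul (fun t : ℝ => t) (fun t : ℝ => t),
    cfcₙ_id' ℝ (cstarAbs a) (isSelfAdjoint_cstarAbs a), cstarAbs_mul_cstarAbs,
    polarIso_eq_mul_cfcₙ_polarFun, star_mul, hstar]
  simp only [mul_assoc]

noncomputable def ramp (a b t : ℝ) : ℝ := min 1 (max 0 ((t - a) / (b - a)))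

theorem continuous_ramp (a b : ℝ) : Continuous (ramp a b) := by
  unfold ramp
  fun_prop

theorem ramp_of_le_left {a b t : ℝ} (hab : a ≤ b) (ht : t ≤ a) : ramp a b t = 0 := by
  rw [ramp, max_eq_left (div_nonpos_of_nonpos_of_nonneg (by linarith) (by linarith))]
  exact min_eq_right zero_le_one

theorem ramp_of_le_right {a b t : ℝ} (hab : a < b) (ht : b ≤ t) : ramp a b t = 1 := by
  have : 1 ≤ (t - a) / (b - a) := (one_le_div (by linarith)).mpr (by linarith)
  rw [ramp, max_eq_right (zero_le_one.trans this), min_eq_left this]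

theorem HasClosedRange.ramp_eq_one {a : A} (ha : HasClosedRange a) {b t : ℝ} (hb : b < crEps a)
    (ht : t ∈ quasispectrum ℝ (cstarAbs a)) (ht0 : t ≠ 0) : ramp b (crEps a) t = 1 :=
  ramp_of_le_right hb (ha.crEps_le ht ht0)

theorem one_le_norm_star_polarIso_mul_polarIso_sub {a : A} (ha : HasClosedRange a) {K : ℝ → ℝ}
    (hK : Continuous K) (hK0 : K 0 = 0) {t : ℝ} (ht : t ∈ quasispectrum ℝ (cstarAbs a))
    (ht0 : t ≠ 0) (hKt : K t = 0) :
    1 ≤ ‖star (polarIso a) * polarIso a - cfcₙ K (cstarAbs a)‖ := by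
  have hε := ha.crEps_pos
  rw [star_polarIso_mul_polarIso ha (ramp_of_le_left hε.le le_rfl)
      fun s hs hs0 => ha.ramp_eq_one hε hs hs0,
    ← cfcₙ_sub (ramp 0 (crEps a)) K _ (continuous_ramp _ _).continuousOn
      (ramp_of_le_left hε.le le_rfl) hK.continuousOn hK0]
  simpa [ha.ramp_eq_one hε ht ht0, hKt] using
    norm_apply_le_norm_cfcₙ (fun s => ramp 0 (crEps a) s - K s) (cstarAbs a) ht
      ((continuous_ramp _ _).sub hK).continuousOn (by simp [ramp_of_le_left hε.le le_rfl, hK0])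
      (isSelfAdjoint_cstarAbs a)

/-- **Proposition 2.** Let `f : X → A` be a continuous function from a topological
space into a C*-algebra such that `f x` has closed range for each `x`, let
`u x = 𝐮 (f x)`, and let `x₀ ∈ X`.  Then the following are equivalent:
(i) `u` is continuous at `x₀`;
(ii) `x ↦ u(x)* u(x)` is continuous at `x₀`;
(iii) there are `ε > 0` and a neighborhood `V` of `x₀` such that the spectrum of
`|f x|` omits `(0, ε)` for every `x ∈ V`. -/
theorem polarIso_continuousAt_tfae
    {X : Type*} [TopologicalSpace X] {A : Type*} [NonUnitalCStarAlgebra A]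
    (f : X → A) (hf : Continuous f) (hcr : ∀ x, HasClosedRange (f x))
    (u : X → A) (hu : ∀ x, u x = polarIso (f x)) (x₀ : X) :
    List.TFAE
      [ ContinuousAt u x₀,
        ContinuousAt (fun x => star (u x) * u x) x₀,
        ∃ ε > 0, ∃ V ∈ nhds x₀, ∀ x ∈ V,
          ∀ s ∈ quasispectrum ℝ (cstarAbs (f x)), s ∉ Set.Ioo 0 ε ] := by
  obtain rfl : u = fun x => polarIso (f x) := funext hu
  tfae_have 1 → 2 := fun h => h.star.mul h
  tfae_have 3 → 1 := by
    rintro ⟨ε, hε, V, hV, hgap⟩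
    have hcont : Continuous fun x => f x * cfcₙ (polarFun ε) (cstarAbs (f x)) :=
      hf.mul ((continuous_cfcₙ_cstarAbs (continuous_polarFun hε) (polarFun_zero ε)).comp hf)
    exact hcont.continuousAt.congr (eventually_of_mem hV fun x hx =>
      (polarIso_eq_of_gap hε (hgap x hx)).symm)
  tfae_have 2 → 3 := by
    intro h2
    set ε := crEps (f x₀)
    have hε : 0 < ε := (hcr x₀).crEps_pos
    have hK0 : ramp (ε / 2) ε 0 = 0 := ramp_of_le_left (by linarith) (by positivity)
    have hKx₀ : star (polarIso (f x₀)) * polarIso (f x₀) =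
        cfcₙ (ramp (ε / 2) ε) (cstarAbs (f x₀)) :=
      star_polarIso_mul_polarIso (hcr x₀) hK0 fun t ht ht0 =>
        (hcr x₀).ramp_eq_one (by linarith) ht ht0
    have hlim : Tendsto (fun x => star (polarIso (f x)) * polarIso (f x) -
        cfcₙ (ramp (ε / 2) ε) (cstarAbs (f x))) (𝓝 x₀) (𝓝 0) := by
      have := h2.tendsto.sub
        (((continuous_cfcₙ_cstarAbs (continuous_ramp _ _) hK0).comp hf).tendsto x₀)
      rwa [Function.comp_apply, hKx₀, sub_self] at this
    refine ⟨ε / 2, by positivity, _,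
      hlim.norm.eventually (gt_mem_nhds (show ‖(0 : A)‖ < 1 by simp)), ?_⟩
    rintro x hx t ht ⟨ht0, htε⟩
    have := one_le_norm_star_polarIso_mul_polarIso_sub (hcr x) (continuous_ramp _ _) hK0 ht
      ht0.ne' (ramp_of_le_left (by linarith) htε.le)
    exact this.not_gt hx
  tfae_finish
end

section
/- Let H be a complex Hilbert space and let u, v ∈ B(H) be bounded operators such that u is a proper isometry (u*u = 1 and uu* ≠ 1) and v is a proper co-isometry (vv* = 1 and v*v ≠ 1). Then ‖u − v‖ = 2. -/
open ContinuousLinearMap RCLike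

open scoped InnerProductSpace

/-!
Put `T = v† u`; it is an isometry because `v v† = 1`, and every `x ∈ ker v` is orthogonal to its
range, as `⟪x, v† y⟫ = ⟪v x, y⟫`. For `x ≠ 0` the alternating sums `ξₘ = ∑_{k ≤ m} (-1)ᵏ Tᵏ x`
satisfy `‖ξₘ‖² = (m + 1) ‖x‖²` and `⟪ξₘ, T ξₘ⟫ = -m ‖x‖²`, so the numerical range of `T` comes
arbitrarily close to `-1`. As `u` is an isometry,
`‖ξ‖² - re ⟪ξ, T ξ⟫ = re ⟪(u - v) ξ, u ξ⟫ ≤ ‖u - v‖ ‖ξ‖²`, which forces `‖u - v‖ ≥ 2`; the reverse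
inequality holds because `u` and `v` are contractions.
-/

section

variable {𝕜 E F : Type*} [RCLike 𝕜] [NormedAddCommGroup E] [InnerProductSpace 𝕜 E]
  [NormedAddCommGroup F] [InnerProductSpace 𝕜 F]

namespace LinearIsometry

variable (T : E →ₗᵢ[𝕜] E)

/-- `T.alternatingOrbitSum x m = ∑ k ∈ range (m + 1), (-1) ^ k • (T ^ k) x`. -/
def alternatingOrbitSum (x : E) : ℕ → E
  | 0 => x
  | m + 1 => x - T (alternatingOrbitSum x m)

variable {T} {x : E}

theorem inner_alternatingOrbitSum_left (hxT : ∀ y, ⟪x, T y⟫_𝕜 = 0) :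
    ∀ m, ⟪T.alternatingOrbitSum x m, x⟫_𝕜 = ⟪x, x⟫_𝕜
  | 0 => rfl
  | m + 1 => by
    rw [alternatingOrbitSum, inner_sub_left, inner_eq_zero_symm.mp (hxT _), sub_zero]

theorem inner_alternatingOrbitSum_self (hxT : ∀ y, ⟪x, T y⟫_𝕜 = 0) :
    ∀ m : ℕ, ⟪T.alternatingOrbitSum x m, T.alternatingOrbitSum x m⟫_𝕜 = (m + 1) * ⟪x, x⟫_𝕜
  | 0 => by simp [alternatingOrbitSum]
  | m + 1 => by
    rw [alternatingOrbitSum, inner_sub_sub_self, hxT, inner_eq_zero_symm.mp (hxT _),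
      T.inner_map_map, inner_alternatingOrbitSum_self hxT m]
    push_cast
    ring

theorem inner_alternatingOrbitSum_map (hxT : ∀ y, ⟪x, T y⟫_𝕜 = 0) :
    ∀ m : ℕ, ⟪T.alternatingOrbitSum x m, T (T.alternatingOrbitSum x m)⟫_𝕜 = -m * ⟪x, x⟫_𝕜
  | 0 => by simp [alternatingOrbitSum, hxT]
  | m + 1 => by
    set ξ := T.alternatingOrbitSum x m
    calc ⟪x - T ξ, T (x - T ξ)⟫_𝕜 = -(⟪ξ, x⟫_𝕜 - ⟪ξ, T ξ⟫_𝕜) := by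
          rw [inner_sub_left, hxT, T.inner_map_map, inner_sub_right, zero_sub]
      _ = -(m + 1 : ℕ) * ⟪x, x⟫_𝕜 := by
          rw [inner_alternatingOrbitSum_left hxT, inner_alternatingOrbitSum_map hxT m]
          push_cast
          ring

theorem norm_alternatingOrbitSum_sq (hxT : ∀ y, ⟪x, T y⟫_𝕜 = 0) (m : ℕ) :
    ‖T.alternatingOrbitSum x m‖ ^ 2 = (m + 1) * ‖x‖ ^ 2 := by
  have h := inner_alternatingOrbitSum_self hxT m
  rw [inner_self_eq_norm_sq_to_K, inner_self_eq_norm_sq_to_K] at h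
  exact_mod_cast h

theorem re_inner_alternatingOrbitSum_map (hxT : ∀ y, ⟪x, T y⟫_𝕜 = 0) (m : ℕ) :
    re ⟪T.alternatingOrbitSum x m, T (T.alternatingOrbitSum x m)⟫_𝕜 = -m * ‖x‖ ^ 2 := by
  rw [inner_alternatingOrbitSum_map hxT, inner_self_eq_norm_sq_to_K]
  norm_cast

theorem exists_re_inner_map_lt (hx : x ≠ 0) (hxT : ∀ y, ⟪x, T y⟫_𝕜 = 0) {ε : ℝ} (hε : 0 < ε) :
    ∃ ξ : E, ξ ≠ 0 ∧ re ⟪ξ, T ξ⟫_𝕜 < (ε - 1) * ‖ξ‖ ^ 2 := by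
  obtain ⟨m, hm⟩ := exists_nat_one_div_lt hε
  have hεm : 1 < ε * (m + 1) := by rwa [div_lt_iff₀ (by positivity)] at hm
  have hx2 : 0 < ‖x‖ ^ 2 := by positivity
  have hnorm := norm_alternatingOrbitSum_sq hxT m
  refine ⟨T.alternatingOrbitSum x m, fun h0 => ?_, ?_⟩
  · rw [h0, norm_zero] at hnorm
    nlinarith
  · rw [re_inner_alternatingOrbitSum_map hxT, hnorm]
    nlinarith

end LinearIsometry

theorem ContinuousLinearMap.norm_sq_sub_re_inner_le {u : E →L[𝕜] F} (hu : ∀ x, ‖u x‖ = ‖x‖)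
    (v : E →L[𝕜] F) (ξ : E) : ‖ξ‖ ^ 2 - re ⟪v ξ, u ξ⟫_𝕜 ≤ ‖u - v‖ * ‖ξ‖ ^ 2 :=
  calc ‖ξ‖ ^ 2 - re ⟪v ξ, u ξ⟫_𝕜 = re ⟪(u - v) ξ, u ξ⟫_𝕜 := by
        rw [sub_apply, inner_sub_left, map_sub, inner_self_eq_norm_sq, hu]
    _ ≤ ‖(u - v) ξ‖ * ‖u ξ‖ := re_inner_le_norm _ _
    _ ≤ ‖u - v‖ * ‖ξ‖ * ‖ξ‖ := by rw [hu]; gcongr; exact le_opNorm _ _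
    _ = ‖u - v‖ * ‖ξ‖ ^ 2 := by ring

theorem ContinuousLinearMap.exists_ne_zero_apply_eq_zero_of_comp_adjoint_eq_one
    [CompleteSpace E] [CompleteSpace F] {v : E →L[𝕜] F} (hv : v ∘L adjoint v = 1)
    (hv' : adjoint v ∘L v ≠ 1) : ∃ x : E, x ≠ 0 ∧ v x = 0 := by
  obtain ⟨y, hy⟩ : ∃ y, adjoint v (v y) ≠ y := by
    by_contra! h
    exact hv' (ext h)
  refine ⟨y - adjoint v (v y), sub_ne_zero.mpr hy.symm, ?_⟩
  rw [map_sub, ← comp_apply v, hv, one_apply_eq_self, sub_self]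

end

theorem norm_sub_eq_two_of_proper_isometry_proper_coisometry_general
    {H : Type*} [NormedAddCommGroup H] [InnerProductSpace ℂ H] [CompleteSpace H]
    (u v : H →L[ℂ] H)
    (hu : adjoint u * u = 1)
    (hv : v * adjoint v = 1) (hv' : adjoint v * v ≠ 1) :
    ‖u - v‖ = 2 := by
  have hu_iso : ∀ x, ‖u x‖ = ‖x‖ := (norm_map_iff_adjoint_comp_self u).2 hu
  have hv_iso : ∀ x, ‖adjoint v x‖ = ‖x‖ :=
    (norm_map_iff_adjoint_comp_self _).2 (by rwa [adjoint_adjoint])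
  let T : H →ₗᵢ[ℂ] H := ⟨(adjoint v ∘L u : H →L[ℂ] H), fun x => by simp [hv_iso, hu_iso]⟩
  obtain ⟨x, hx, hvx⟩ := exists_ne_zero_apply_eq_zero_of_comp_adjoint_eq_one hv hv'
  have hxT : ∀ y, ⟪x, T y⟫_ℂ = 0 := fun y => by
    simp [T, adjoint_inner_right, hvx]
  refine le_antisymm ?_ (le_of_forall_pos_lt_add fun ε hε => ?_)
  · have hu1 : ‖u‖ ≤ 1 := opNorm_le_bound _ zero_le_one fun x => by simp [hu_iso]
    have hv1 : ‖v‖ ≤ 1 := by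
      rw [← adjoint.norm_map]
      exact opNorm_le_bound _ zero_le_one fun x => by simp [hv_iso]
    linarith [norm_sub_le u v]
  · obtain ⟨ξ, hξ, hTξ⟩ := T.exists_re_inner_map_lt hx hxT hε
    have h := norm_sq_sub_re_inner_le hu_iso v ξ
    rw [show ⟪v ξ, u ξ⟫_ℂ = ⟪ξ, T ξ⟫_ℂ from (adjoint_inner_right v ξ (u ξ)).symm] at h
    have hξ2 : 0 < ‖ξ‖ ^ 2 := by positivity
    nlinarith

/-- If `u` is a proper isometry and `v` a proper co-isometry on a complex
Hilbert space `H`, then `‖u − v‖ = 2`. -/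
theorem norm_sub_eq_two_of_proper_isometry_proper_coisometry
    {H : Type*} [NormedAddCommGroup H] [InnerProductSpace ℂ H] [CompleteSpace H]
    (u v : H →L[ℂ] H)
    (hu : adjoint u * u = 1) (hu' : u * adjoint u ≠ 1)
    (hv : v * adjoint v = 1) (hv' : adjoint v * v ≠ 1) :
    ‖u - v‖ = 2 :=
  norm_sub_eq_two_of_proper_isometry_proper_coisometry_general u v hu hv hv'
end

section
/- For every θ ∈ [0, π/2] there exist a complex Hilbert space H and co-isometries u, v ∈ B(H) (i.e., uu* = vv* = 1, so in particular u and v are extremal partial isometries) such that ‖u − v‖ = 2·sin(θ/2) and ‖u*u − v*v‖ = sin θ. Hence the inequality ‖u*u − v*v‖ ≤ d(1 − d²/4)^{1/2} for extremal partial isometries with d = ‖u − v‖ ≤ √2 is sharp. -/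
/-!
Let `t` be a co-isometry and `e` a unit vector with `t e = 0`, so that `e` and `e₁ = t* e` are
orthonormal. Adding to `t` the rank-one operator `x ↦ ⟪w, x⟫ e` with
`w = sin θ • e + (cos θ - 1) • e₁` gives `v` with `v* = R t*`, where `R` is the rotation by `θ` of
the plane spanned by `e, e₁` (taking `e₁` to `sin θ • e + cos θ • e₁`); hence `v` is again a
co-isometry. Then `‖t - v‖ = ‖w‖ = 2 sin (θ/2)`, and `t*t - v*v = -sin θ • (|e⟩⟨g| + |e₁⟩⟨f|)` with
`g, f` the rotated orthonormal pair, an operator of norm `sin θ`. The adjoint of the unilateral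
shift on `ℓ²(ℕ, ℂ)` and the first basis vector provide `t` and `e`.
-/

open ContinuousLinearMap Real
open InnerProductSpace
open scoped InnerProductSpace lp

section Orthonormal

variable {𝕜 E F ι : Type*} [RCLike 𝕜] [NormedAddCommGroup E] [InnerProductSpace 𝕜 E]
  [NormedAddCommGroup F] [InnerProductSpace 𝕜 F] [Fintype ι]

theorem Orthonormal.norm_sum_smul_sq {v : ι → E} (hv : Orthonormal 𝕜 v) (l : ι → 𝕜) :
    ‖∑ i, l i • v i‖ ^ 2 = ∑ i, ‖l i‖ ^ 2 := by
  rw [@norm_sq_eq_re_inner 𝕜, hv.inner_sum, map_sum]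
  simp [RCLike.conj_mul]

theorem norm_sum_rankOne_of_orthonormal [Nonempty ι] {v : ι → E} {w : ι → F}
    (hv : Orthonormal 𝕜 v) (hw : Orthonormal 𝕜 w) : ‖∑ i, rankOne 𝕜 (v i) (w i)‖ = 1 := by
  classical
  apply le_antisymm
  · refine opNorm_le_bound _ zero_le_one fun x => ?_
    have hsq : ‖(∑ i, rankOne 𝕜 (v i) (w i)) x‖ ^ 2 ≤ (1 * ‖x‖) ^ 2 := by
      rw [sum_apply, one_mul]
      simp only [rankOne_apply]
      rw [hv.norm_sum_smul_sq]
      simpa using hw.sum_inner_products_le x (s := Finset.univ)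
    exact le_of_sq_le_sq hsq (by positivity)
  · obtain ⟨i⟩ := ‹Nonempty ι›
    have hwi : (∑ j, rankOne 𝕜 (v j) (w j)) (w i) = v i := by
      simp [orthonormal_iff_ite.mp hw]
    calc 1 = ‖(∑ j, rankOne 𝕜 (v j) (w j)) (w i)‖ := by rw [hwi, hv.norm_eq_one]
      _ ≤ _ := by simpa [hw.norm_eq_one] using (∑ j, rankOne 𝕜 (v j) (w j)).le_opNorm (w i)

theorem Orthonormal.rotate {a b : E} (h : Orthonormal 𝕜 ![a, b]) {s c : ℝ}
    (hsc : s ^ 2 + c ^ 2 = 1) :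
    Orthonormal 𝕜 ![(s : 𝕜) • a + (c : 𝕜) • b, (c : 𝕜) • a - (s : 𝕜) • b] := by
  have ha : ⟪a, a⟫_𝕜 = 1 := by simpa using orthonormal_iff_ite.mp h 0 0
  have hb : ⟪b, b⟫_𝕜 = 1 := by simpa using orthonormal_iff_ite.mp h 1 1
  have hab : ⟪a, b⟫_𝕜 = 0 := by simpa using orthonormal_iff_ite.mp h 0 1
  have hba : ⟪b, a⟫_𝕜 = 0 := by simpa using orthonormal_iff_ite.mp h 1 0
  have hsc' : (s : 𝕜) ^ 2 + (c : 𝕜) ^ 2 = 1 := by exact_mod_cast hsc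
  rw [orthonormal_iff_ite]
  intro i j
  fin_cases i <;> fin_cases j <;>
    simp [inner_add_left, inner_add_right, inner_sub_left, inner_sub_right, inner_smul_left,
      inner_smul_right, ha, hb, hab, hba, -inner_self_eq_norm_sq_to_K] <;>
    first | ring1 | linear_combination hsc'

theorem Orthonormal.norm_sin_smul_add_cos_sub_one_smul_sq {a b : E} (h : Orthonormal 𝕜 ![a, b])
    (θ : ℝ) : ‖(sin θ : 𝕜) • a + ((cos θ - 1 : ℝ) : 𝕜) • b‖ ^ 2 = 2 - 2 * cos θ := by
  have hsum := h.norm_sum_smul_sq ![(sin θ : 𝕜), ((cos θ - 1 : ℝ) : 𝕜)]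
  simp only [Fin.sum_univ_two, Matrix.cons_val_zero, Matrix.cons_val_one, RCLike.norm_ofReal,
    sq_abs] at hsum
  rw [hsum]
  nlinarith [sin_sq_add_cos_sq θ]

end Orthonormal

section RankOnePerturbation

variable {𝕜 H : Type*} [RCLike 𝕜] [NormedAddCommGroup H] [InnerProductSpace 𝕜 H] [CompleteSpace H]

theorem adjoint_add_rankOne (t : H →L[𝕜] H) (e w : H) :
    adjoint (t + rankOne 𝕜 e w) = adjoint t + rankOne 𝕜 w e := by
  rw [map_add, adjoint_rankOne]

theorem add_rankOne_mul_adjoint_eq_one {t : H →L[𝕜] H} (ht : t * adjoint t = 1) {e w : H}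
    {c : ℝ} (htw : t w = (c : 𝕜) • e) (hc : 2 * c + ‖w‖ ^ 2 = 0) :
    (t + rankOne 𝕜 e w) * adjoint (t + rankOne 𝕜 e w) = 1 := by
  have hc' : (2 * c + ‖w‖ ^ 2 : 𝕜) = 0 := by exact_mod_cast hc
  rw [adjoint_add_rankOne, add_mul, mul_add, mul_add, ht]
  simp only [mul_def, comp_rankOne, rankOne_comp, adjoint_adjoint, rankOne_apply, htw, map_smul,
    map_smulₛₗ, smul_apply, RCLike.conj_ofReal, inner_self_eq_norm_sq_to_K]
  linear_combination (norm := module) hc' • rankOne 𝕜 e e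

theorem adjoint_mul_sub_adjoint_add_rankOne_mul (t : H →L[𝕜] H) {e : H} (he : ‖e‖ = 1) (w : H) :
    adjoint t * t - adjoint (t + rankOne 𝕜 e w) * (t + rankOne 𝕜 e w) =
      -(rankOne 𝕜 (adjoint t e) w + rankOne 𝕜 w (adjoint t e) + rankOne 𝕜 w w) := by
  rw [adjoint_add_rankOne, add_mul, mul_add, mul_add]
  simp only [mul_def, comp_rankOne, rankOne_comp, rankOne_apply, inner_self_eq_norm_sq_to_K, he,
    map_one, one_pow, one_smul, neg_add_rev]
  abel

end RankOnePerturbation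

namespace HilbertBasis

variable {𝕜 E : Type*} [RCLike 𝕜] [NormedAddCommGroup E] [InnerProductSpace 𝕜 E]
  (b : HilbertBasis ℕ 𝕜 E)

theorem orthonormal_succ : Orthonormal 𝕜 (fun n => b (n + 1)) :=
  b.orthonormal.comp _ Nat.succ_injective

variable [CompleteSpace E]

noncomputable def shift : E →L[𝕜] E :=
  (b.orthonormal_succ.orthogonalFamily.linearIsometry.comp
    b.repr.toLinearIsometry).toContinuousLinearMap

theorem adjoint_shift_mul_shift : adjoint b.shift * b.shift = 1 :=
  LinearIsometry.adjoint_comp_self _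

theorem adjoint_shift_apply_zero : adjoint b.shift (b 0) = 0 := by
  refine ext_inner_right 𝕜 fun x => ?_
  rw [adjoint_inner_left, inner_zero_left]
  have hsum := (b.orthonormal_succ.orthogonalFamily.hasSum_linearIsometry (b.repr x)).mapL
    (innerSL 𝕜 (b 0))
  refine hsum.unique ?_
  convert hasSum_zero with n
  simp [b.orthonormal.inner_eq_zero (Nat.succ_ne_zero n).symm]

end HilbertBasis

section RotatedCoisometry

variable {𝕜 H : Type*} [RCLike 𝕜] [NormedAddCommGroup H] [InnerProductSpace 𝕜 H] [CompleteSpace H]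

theorem orthonormal_adjoint_apply {t : H →L[𝕜] H} (ht : t * adjoint t = 1) {e : H}
    (he : ‖e‖ = 1) (hte : t e = 0) : Orthonormal 𝕜 ![e, adjoint t e] := by
  have hiso : ∀ x, ‖adjoint t x‖ = ‖x‖ :=
    (adjoint t).norm_map_iff_adjoint_comp_self.mpr (by rw [adjoint_adjoint, ← mul_def, ht])
  simp [he, hiso, adjoint_inner_right, hte]

noncomputable def rotatedCoisometry (t : H →L[𝕜] H) (e : H) (θ : ℝ) : H →L[𝕜] H :=
  t + rankOne 𝕜 e ((sin θ : 𝕜) • e + ((cos θ - 1 : ℝ) : 𝕜) • adjoint t e)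

variable {t : H →L[𝕜] H} (ht : t * adjoint t = 1) {e : H} (he : ‖e‖ = 1) (hte : t e = 0)
include ht he hte

theorem rotatedCoisometry_mul_adjoint (θ : ℝ) :
    rotatedCoisometry t e θ * adjoint (rotatedCoisometry t e θ) = 1 := by
  refine add_rankOne_mul_adjoint_eq_one ht (c := cos θ - 1) ?_ ?_
  · have htt : t (adjoint t e) = e := congr($ht e)
    rw [map_add, map_smul, map_smul, hte, htt, smul_zero, zero_add]
  · rw [(orthonormal_adjoint_apply ht he hte).norm_sin_smul_add_cos_sub_one_smul_sq]
    ring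

theorem norm_sub_rotatedCoisometry (θ : ℝ) :
    ‖t - rotatedCoisometry t e θ‖ = 2 * |sin (θ / 2)| := by
  rw [rotatedCoisometry, sub_add_cancel_left, norm_neg, norm_rankOne, he, one_mul,
    ← sq_eq_sq₀ (norm_nonneg _) (by positivity),
    (orthonormal_adjoint_apply ht he hte).norm_sin_smul_add_cos_sub_one_smul_sq,
    mul_pow, sq_abs, sin_sq_eq_half_sub, show 2 * (θ / 2) = θ by ring]
  ring

theorem norm_adjoint_mul_sub_rotatedCoisometry (θ : ℝ) :
    ‖adjoint t * t - adjoint (rotatedCoisometry t e θ) * rotatedCoisometry t e θ‖ = |sin θ| := by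
  have hv := orthonormal_adjoint_apply ht he hte
  rw [rotatedCoisometry, adjoint_mul_sub_adjoint_add_rankOne_mul t he]
  set e₁ := adjoint t e
  set w := (sin θ : 𝕜) • e + ((cos θ - 1 : ℝ) : 𝕜) • e₁
  have key : rankOne 𝕜 e₁ w + rankOne 𝕜 w e₁ + rankOne 𝕜 w w =
      (sin θ : 𝕜) • (rankOne 𝕜 e ((sin θ : 𝕜) • e + (cos θ : 𝕜) • e₁) +
        rankOne 𝕜 e₁ ((cos θ : 𝕜) • e - (sin θ : 𝕜) • e₁)) := by
    have h : (sin θ : 𝕜) ^ 2 + (cos θ : 𝕜) ^ 2 = 1 := by exact_mod_cast sin_sq_add_cos_sq θ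
    simp only [w, map_add, map_sub, map_smul, map_smulₛₗ, add_apply, smul_apply,
      RCLike.conj_ofReal, map_one]
    linear_combination (norm := module) h • rankOne 𝕜 e₁ e₁
  have hnorm : ‖rankOne 𝕜 e ((sin θ : 𝕜) • e + (cos θ : 𝕜) • e₁) +
      rankOne 𝕜 e₁ ((cos θ : 𝕜) • e - (sin θ : 𝕜) • e₁)‖ = 1 := by
    simpa [Fin.sum_univ_two] using
      norm_sum_rankOne_of_orthonormal hv (hv.rotate (sin_sq_add_cos_sq θ))
  rw [key, norm_neg, norm_smul, RCLike.norm_ofReal, hnorm, mul_one]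

end RotatedCoisometry

/-- For every `θ ∈ [0, π/2]` there are a complex Hilbert space `H` and
co-isometries `u, v` on `H` with `‖u − v‖ = 2 sin(θ/2)` and
`‖u*u − v*v‖ = sin θ`; hence the inequality of Theorem 7 is sharp. -/
theorem exists_coisometries_norm_sub_eq
    (θ : ℝ) (hθ : θ ∈ Set.Icc 0 (π / 2)) :
    ∃ (H : Type) (_ : NormedAddCommGroup H) (_ : InnerProductSpace ℂ H)
      (_ : CompleteSpace H) (u v : H →L[ℂ] H),
      u * adjoint u = 1 ∧ v * adjoint v = 1 ∧
      ‖u - v‖ = 2 * Real.sin (θ / 2) ∧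
      ‖adjoint u * u - adjoint v * v‖ = Real.sin θ := by
  obtain ⟨h0, h1⟩ := hθ
  have hπ := pi_pos
  let b : HilbertBasis ℕ ℂ ℓ²(ℕ, ℂ) := default
  have ht : adjoint b.shift * adjoint (adjoint b.shift) = 1 := by
    rw [adjoint_adjoint, b.adjoint_shift_mul_shift]
  have he : ‖b 0‖ = 1 := b.orthonormal.norm_eq_one 0
  have hte := b.adjoint_shift_apply_zero
  refine ⟨ℓ²(ℕ, ℂ), inferInstance, inferInstance, inferInstance, adjoint b.shift,
    rotatedCoisometry (adjoint b.shift) (b 0) θ, ht, rotatedCoisometry_mul_adjoint ht he hte θ,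
    ?_, ?_⟩
  · rw [norm_sub_rotatedCoisometry ht he hte,
      abs_of_nonneg (sin_nonneg_of_nonneg_of_le_pi (by linarith) (by linarith))]
  · rw [norm_adjoint_mul_sub_rotatedCoisometry ht he hte,
      abs_of_nonneg (sin_nonneg_of_nonneg_of_le_pi h0 (by linarith))]
end

section
/- Let H be a complex Hilbert space, let 0 < φ < π/2, and let e, k ∈ H be unit vectors with ⟨e, k⟩ = cos φ. For vectors f, g ∈ H let f×g denote the rank-one operator h ↦ ⟨h, g⟩·f. Then for all unit vectors g, h ∈ H one has ‖g×e − h×k‖ ≥ sin φ, and this bound is attained: the minimum of ‖g×e − h×k‖ over unit vectors g, h ∈ H equals sin φ. -/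
/-!
Write `k = cos φ • e + sin φ • v` with `v` a unit vector orthogonal to `e`. The unit vector
`x = sin φ • e - cos φ • v` is orthogonal to `k`, so `(g×e - h×k) x = sin φ • g`, which gives the
lower bound. For `g = v` and `h = -sin φ • e + cos φ • v` the operator vanishes on `{e, v}ᗮ` and
acts on the coordinates `(⟪e, x⟫, ⟪v, x⟫)` as `sin φ` times a reflection, so by Bessel's
inequality its norm is at most `sin φ`.
-/

open scoped InnerProductSpace

/-- The rank-one operator `f × g : h ↦ ⟨h, g⟩ • f` on a complex Hilbert space
(inner product linear in `h`). -/
noncomputable def rankOne {H : Type*} [NormedAddCommGroup H] [InnerProductSpace ℂ H]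
    (f g : H) : H →L[ℂ] H :=
  (innerSL ℂ g).smulRight f

lemma Complex.norm_sq_add_norm_sq_of_reflection {c s : ℝ} (hcs : c ^ 2 + s ^ 2 = 1) (a b : ℂ) :
    ‖c * a + s * b‖ ^ 2 + ‖s * a - c * b‖ ^ 2 = ‖a‖ ^ 2 + ‖b‖ ^ 2 := by
  simp only [Complex.sq_norm, Complex.normSq_apply, Complex.add_re, Complex.add_im,
    Complex.sub_re, Complex.sub_im, Complex.mul_re, Complex.mul_im, Complex.ofReal_re,
    Complex.ofReal_im]
  linear_combination (a.re ^ 2 + a.im ^ 2 + b.re ^ 2 + b.im ^ 2) * hcs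

section

variable {H : Type*} [NormedAddCommGroup H] [InnerProductSpace ℂ H]

@[simp]
lemma rankOne_apply (f g x : H) : rankOne f g x = ⟪g, x⟫_ℂ • f := rfl

lemma norm_inner_mul_norm_le_norm_rankOne_sub_mul {k x : H} (hkx : ⟪k, x⟫_ℂ = 0) (g e h : H) :
    ‖⟪e, x⟫_ℂ‖ * ‖g‖ ≤ ‖rankOne g e - rankOne h k‖ * ‖x‖ := by
  simpa [hkx, norm_smul] using (rankOne g e - rankOne h k).le_opNorm x

lemma exists_norm_eq_one_inner_eq_zero_eq_smul_add_smul {e k : H} (he : ‖e‖ = 1)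
    (hk : ‖k‖ = 1) {c s : ℝ} (hek : ⟪e, k⟫_ℂ = c) (hs : 0 < s) (hcs : c ^ 2 + s ^ 2 = 1) :
    ∃ v : H, ‖v‖ = 1 ∧ ⟪e, v⟫_ℂ = 0 ∧ k = (c : ℂ) • e + (s : ℂ) • v := by
  have hperp : ⟪e, k - (c : ℂ) • e⟫_ℂ = 0 := by
    rw [inner_sub_right, inner_smul_right, hek, inner_self_eq_one_of_norm_eq_one he, mul_one,
      sub_self]
  have hnorm : ‖k - (c : ℂ) • e‖ = s := by
    have hpyth := norm_add_sq_eq_norm_sq_add_norm_sq_of_inner_eq_zero ((c : ℂ) • e)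
      (k - (c : ℂ) • e) (by rw [inner_smul_left, hperp, mul_zero])
    rw [add_sub_cancel, hk, norm_smul, he, Complex.norm_real, Real.norm_eq_abs] at hpyth
    nlinarith [abs_mul_abs_self c, norm_nonneg (k - (c : ℂ) • e)]
  refine ⟨(s : ℂ)⁻¹ • (k - (c : ℂ) • e), ?_, ?_, ?_⟩
  · rw [norm_smul, hnorm, norm_inv, Complex.norm_real, Real.norm_of_nonneg hs.le,
      inv_mul_cancel₀ hs.ne']
  · rw [inner_smul_right, hperp, mul_zero]
  · rw [smul_smul, mul_inv_cancel₀ (by exact_mod_cast hs.ne'), one_smul, add_sub_cancel]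

section Orthonormal

variable {u v : H} (hu : ‖u‖ = 1) (hv : ‖v‖ = 1) (huv : ⟪u, v⟫_ℂ = 0)
include hu hv huv

lemma norm_smul_add_smul_sq_of_orthonormal (α β : ℂ) :
    ‖α • u + β • v‖ ^ 2 = ‖α‖ ^ 2 + ‖β‖ ^ 2 := by
  have hpyth := norm_add_sq_eq_norm_sq_add_norm_sq_of_inner_eq_zero (α • u) (β • v)
    (by rw [inner_smul_left, inner_smul_right, huv, mul_zero, mul_zero])
  rw [norm_smul, norm_smul, hu, hv, mul_one, mul_one] at hpyth
  rw [sq, sq, sq, hpyth]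

lemma norm_ofReal_smul_add_ofReal_smul_of_orthonormal {a b : ℝ} (hab : a ^ 2 + b ^ 2 = 1) :
    ‖(a : ℂ) • u + (b : ℂ) • v‖ = 1 := by
  rw [← pow_eq_one_iff_of_nonneg (norm_nonneg _) two_ne_zero,
    norm_smul_add_smul_sq_of_orthonormal hu hv huv, Complex.norm_real, Complex.norm_real,
    Real.norm_eq_abs, Real.norm_eq_abs, sq_abs, sq_abs, hab]

lemma norm_inner_sq_add_norm_inner_sq_le_of_orthonormal (x : H) :
    ‖⟪u, x⟫_ℂ‖ ^ 2 + ‖⟪v, x⟫_ℂ‖ ^ 2 ≤ ‖x‖ ^ 2 := by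
  have hon : Orthonormal ℂ ![u, v] := by
    rw [orthonormal_iff_ite]
    intro i j
    fin_cases i <;> fin_cases j <;> simp [hu, hv, huv, inner_eq_zero_symm]
  simpa using hon.sum_inner_products_le x (s := Finset.univ)

variable {c s : ℝ} (hcs : c ^ 2 + s ^ 2 = 1)
include hcs

lemma le_norm_rankOne_sub_of_orthonormal {g : H} (hg : ‖g‖ = 1) (h : H) :
    s ≤ ‖rankOne g u - rankOne h ((c : ℂ) • u + (s : ℂ) • v)‖ := by
  have hx : ‖(s : ℂ) • u + ((-c : ℝ) : ℂ) • v‖ = 1 :=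
    norm_ofReal_smul_add_ofReal_smul_of_orthonormal hu hv huv (by linear_combination hcs)
  have hvu : ⟪v, u⟫_ℂ = 0 := inner_eq_zero_symm.mp huv
  have hkx : ⟪(c : ℂ) • u + (s : ℂ) • v, (s : ℂ) • u + ((-c : ℝ) : ℂ) • v⟫_ℂ = 0 := by
    simp only [inner_add_left, inner_add_right, inner_smul_left, inner_smul_right,
      Complex.conj_ofReal, inner_self_eq_one_of_norm_eq_one hu,
      inner_self_eq_one_of_norm_eq_one hv, huv, hvu]
    push_cast
    ring
  have hux : ⟪u, (s : ℂ) • u + ((-c : ℝ) : ℂ) • v⟫_ℂ = s := by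
    rw [inner_add_right, inner_smul_right, inner_smul_right, huv,
      inner_self_eq_one_of_norm_eq_one hu, mul_one, mul_zero, add_zero]
  have hbound := norm_inner_mul_norm_le_norm_rankOne_sub_mul hkx g u h
  rw [hux, hx, hg, mul_one, mul_one, Complex.norm_real, Real.norm_eq_abs] at hbound
  exact (le_abs_self s).trans hbound

lemma norm_rankOne_sub_le_of_orthonormal (hs : 0 ≤ s) :
    ‖rankOne v u - rankOne (((-s : ℝ) : ℂ) • u + (c : ℂ) • v) ((c : ℂ) • u + (s : ℂ) • v)‖
      ≤ s := by
  refine ContinuousLinearMap.opNorm_le_bound _ hs fun x => ?_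
  set a := ⟪u, x⟫_ℂ with ha
  set b := ⟪v, x⟫_ℂ with hb
  have hcsC : (c : ℂ) ^ 2 + (s : ℂ) ^ 2 = 1 := by exact_mod_cast hcs
  have happly : (rankOne v u - rankOne (((-s : ℝ) : ℂ) • u + (c : ℂ) • v)
      ((c : ℂ) • u + (s : ℂ) • v)) x = (s : ℂ) • ((c * a + s * b) • u + (s * a - c * b) • v) := by
    simp only [sub_apply, rankOne_apply, inner_add_left, inner_smul_left,
      Complex.conj_ofReal, ← ha, ← hb]
    push_cast
    match_scalars
    · linear_combination (-a) * hcsC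
    · ring
  rw [happly, norm_smul, Complex.norm_real, Real.norm_of_nonneg hs]
  gcongr
  rw [← sq_le_sq₀ (norm_nonneg _) (norm_nonneg _), norm_smul_add_smul_sq_of_orthonormal hu hv huv,
    Complex.norm_sq_add_norm_sq_of_reflection hcs]
  exact norm_inner_sq_add_norm_inner_sq_le_of_orthonormal hu hv huv x

end Orthonormal

end

theorem rankOne_sub_norm_min_general
    {H : Type*} [NormedAddCommGroup H] [InnerProductSpace ℂ H]
    (φ : ℝ) (hφ₀ : 0 < φ) (hφ₁ : φ < Real.pi / 2)
    (e k : H) (he : ‖e‖ = 1) (hk : ‖k‖ = 1)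
    (hek : ⟪e, k⟫_ℂ = (Real.cos φ : ℂ)) :
    (∀ g h : H, ‖g‖ = 1 → ‖h‖ = 1 → Real.sin φ ≤ ‖rankOne g e - rankOne h k‖) ∧
    (∃ g h : H, ‖g‖ = 1 ∧ ‖h‖ = 1 ∧ ‖rankOne g e - rankOne h k‖ = Real.sin φ) := by
  have hs : 0 < Real.sin φ := Real.sin_pos_of_pos_of_lt_pi hφ₀ (by linarith [Real.pi_pos])
  have hcs : Real.cos φ ^ 2 + Real.sin φ ^ 2 = 1 := Real.cos_sq_add_sin_sq φ
  obtain ⟨v, hv, hev, rfl⟩ :=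
    exists_norm_eq_one_inner_eq_zero_eq_smul_add_smul he hk hek hs hcs
  refine ⟨fun g h hg _ => le_norm_rankOne_sub_of_orthonormal he hv hev hcs hg h,
    v, ((-Real.sin φ : ℝ) : ℂ) • e + (Real.cos φ : ℂ) • v, hv, ?_,
    le_antisymm ?_ (le_norm_rankOne_sub_of_orthonormal he hv hev hcs hv _)⟩
  · exact norm_ofReal_smul_add_ofReal_smul_of_orthonormal he hv hev (by linear_combination hcs)
  · exact norm_rankOne_sub_le_of_orthonormal he hv hev hcs hs.le

/-- If `e` and `k` are unit vectors in a complex Hilbert space with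
`⟨e, k⟩ = cos φ` for `0 < φ < π/2`, then `‖g×e − h×k‖ ≥ sin φ` for all unit
vectors `g, h`, and the minimum `sin φ` is attained. -/
theorem rankOne_sub_norm_min
    {H : Type*} [NormedAddCommGroup H] [InnerProductSpace ℂ H] [CompleteSpace H]
    (φ : ℝ) (hφ₀ : 0 < φ) (hφ₁ : φ < Real.pi / 2)
    (e k : H) (he : ‖e‖ = 1) (hk : ‖k‖ = 1)
    (hek : ⟪e, k⟫_ℂ = (Real.cos φ : ℂ)) :
    (∀ g h : H, ‖g‖ = 1 → ‖h‖ = 1 → Real.sin φ ≤ ‖rankOne g e - rankOne h k‖) ∧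
    (∃ g h : H, ‖g‖ = 1 ∧ ‖h‖ = 1 ∧ ‖rankOne g e - rankOne h k‖ = Real.sin φ) :=
  rankOne_sub_norm_min_general φ hφ₀ hφ₁ e k he hk hek
end
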